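/- For each k ≥ 1, if Y ⊆ [0,1]^k has strong measure zero then T^{-k}[Y] = (T × ⋯ × T)^{-1}[Y] ⊆ (2^ℕ)^k has strong measure zero (with respect to the max metric on (2^ℕ)^k). -/
import Mathlib

open Classical
set_option maxHeartbeats 1000000

/-- A subset of a metric space has strong measure zero if for every sequence
`⟨ε_n⟩` of positive reals there is a cover `⟨I_n⟩` with `diam(I_n) < ε_n`. -/
def SMZSet {α : Type*} [PseudoMetricSpace α] (S : Set α) : Prop :=
  ∀ ε : ℕ → ℝ, (∀ n, 0 < ε n) →
    ∃ I : ℕ → Set α, (∀ n, EMetric.diam (I n) < ENNReal.ofReal (ε n)) ∧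
      S ⊆ ⋃ n, I n

/-- The Cantor metric `d(x,y) = 1/(N(x,y)+1)` on `2^ℕ`; the product space
`(2^ℕ)^k` then automatically carries the max metric. -/
noncomputable instance cantorMetric : MetricSpace (ℕ → Bool) where
  dist x y := if x = y then 0 else 1 / (((sInf {n : ℕ | x n ≠ y n} : ℕ) : ℝ) + 1)
  dist_self x := by simp
  dist_comm x y := by
    by_cases h : x = y
    · simp [h]
    · have : {n : ℕ | x n ≠ y n} = {n : ℕ | y n ≠ x n} := by ext n; exact ne_comm
      simp [h, Ne.symm h, this]
  dist_triangle x y z := by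
    by_cases hxz : x = z
    · simp only [hxz, if_pos rfl]
      positivity
    · by_cases hxy : x = y
      · subst hxy; simp [hxz]
      · by_cases hyz : y = z
        · subst hyz; simp [hxz]
        · simp only [if_neg hxz, if_neg hxy, if_neg hyz]
          have hne : {n : ℕ | x n ≠ z n}.Nonempty := by
            rcases Function.ne_iff.mp hxz with ⟨n, hn⟩; exact ⟨n, hn⟩
          have hm := Nat.sInf_mem hne
          set m := sInf {n : ℕ | x n ≠ z n} with hmdef
          have : x m ≠ y m ∨ y m ≠ z m := by
            by_contra hcon
            push_neg at hcon
            exact hm (hcon.1.trans hcon.2)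
          have key : (1 : ℝ) / (m + 1) ≤ 1 / ((sInf {n : ℕ | x n ≠ y n} : ℕ) + 1) ∨
              (1 : ℝ) / (m + 1) ≤ 1 / ((sInf {n : ℕ | y n ≠ z n} : ℕ) + 1) := by
            rcases this with h | h
            · left
              have hle : sInf {n : ℕ | x n ≠ y n} ≤ m := Nat.sInf_le h
              have hle' : ((sInf {n : ℕ | x n ≠ y n} : ℕ) : ℝ) ≤ (m : ℝ) := by exact_mod_cast hle
              gcongr
            · right
              have hle : sInf {n : ℕ | y n ≠ z n} ≤ m := Nat.sInf_le h
              have hle' : ((sInf {n : ℕ | y n ≠ z n} : ℕ) : ℝ) ≤ (m : ℝ) := by exact_mod_cast hle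
              gcongr
          rcases key with h | h
          · calc (1 : ℝ) / (m + 1) ≤ _ := h
              _ ≤ _ := by
                have : (0:ℝ) ≤ 1 / ((sInf {n : ℕ | y n ≠ z n} : ℕ) + 1) := by positivity
                linarith
          · calc (1 : ℝ) / (m + 1) ≤ _ := h
              _ ≤ _ := by
                have : (0:ℝ) ≤ 1 / ((sInf {n : ℕ | x n ≠ y n} : ℕ) + 1) := by positivity
                linarith
  eq_of_dist_eq_zero := by
    intro x y h
    by_contra hxy
    have h' : (if x = y then (0:ℝ) else 1 / (((sInf {n : ℕ | x n ≠ y n} : ℕ) : ℝ) + 1)) = 0 := h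
    rw [if_neg hxy] at h'
    have hpos : (0:ℝ) < 1 / (((sInf {n : ℕ | x n ≠ y n} : ℕ) : ℝ) + 1) := by positivity
    exact absurd h' (ne_of_gt hpos)

/-- The binary-expansion map `T(x) = Σ_{i∈ℕ} x(i)/2^(i+1)`. -/
noncomputable def binExp (x : ℕ → Bool) : ℝ :=
  ∑' i : ℕ, ((x i).toNat : ℝ) / 2 ^ (i + 1)

lemma bool_toNat_le_one (b : Bool) : b.toNat ≤ 1 := by cases b <;> simp

def vN : ℕ → (ℕ → Bool) → ℕ
  | 0, _ => 0
  | (N+1), x => 2 * vN N x + (x N).toNat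

lemma vN_inj (N : ℕ) : ∀ x y : ℕ → Bool, vN N x = vN N y → ∀ j < N, x j = y j := by
  induction N with
  | zero => intro x y _ j hj; omega
  | succ N ih =>
    intro x y h j hj
    simp only [vN] at h
    have hx : (x N).toNat ≤ 1 := bool_toNat_le_one _
    have hy : (y N).toNat ≤ 1 := bool_toNat_le_one _
    have h1 : vN N x = vN N y := by omega
    have h2 : (x N).toNat = (y N).toNat := by omega
    rcases Nat.lt_succ_iff_lt_or_eq.mp hj with hj' | hj'
    · exact ih x y h1 j hj'
    · subst hj'
      revert h2
      cases x j <;> cases y j <;> simp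
lemma summable_binExp (x : ℕ → Bool) : Summable (fun i => ((x i).toNat : ℝ) / 2 ^ (i + 1)) := by
  have hf : Summable (fun i => (1/2 : ℝ) ^ (i+1)) :=
    (summable_nat_add_iff 1).mpr summable_geometric_two
  refine Summable.of_nonneg_of_le (fun i => by positivity) (fun i => ?_) hf
  have : ((x i).toNat : ℝ) ≤ 1 := by exact_mod_cast bool_toNat_le_one (x i)
  rw [one_div, inv_pow, ← one_div]
  gcongr

lemma vN_sum (x : ℕ → Bool) (N : ℕ) :
    ((vN N x : ℝ)) / 2 ^ N = ∑ j ∈ Finset.range N, ((x j).toNat : ℝ) / 2 ^ (j + 1) := by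
  induction N with
  | zero => simp [vN]
  | succ N ih =>
    rw [Finset.sum_range_succ, ← ih]
    simp only [vN]
    push_cast
    field_simp
    ring

lemma binExp_bounds (x : ℕ → Bool) (N : ℕ) :
    (vN N x : ℝ) / 2 ^ N ≤ binExp x ∧ binExp x ≤ ((vN N x : ℝ) + 1) / 2 ^ N := by
  have hs := summable_binExp x
  have hsplit := Summable.sum_add_tsum_nat_add N hs
  have htail0 : 0 ≤ ∑' i, ((x (i + N)).toNat : ℝ) / 2 ^ ((i + N) + 1) :=
    tsum_nonneg (fun i => by positivity)
  have hg : Summable (fun i => (1/2 : ℝ) ^ (i + N + 1)) :=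
    (summable_nat_add_iff (N+1)).mpr summable_geometric_two
  have hle : ∀ i, ((x (i + N)).toNat : ℝ) / 2 ^ ((i + N) + 1) ≤ (1/2 : ℝ) ^ (i + N + 1) := by
    intro i
    have h1 : ((x (i+N)).toNat : ℝ) ≤ 1 := by exact_mod_cast bool_toNat_le_one (x (i+N))
    rw [one_div, inv_pow, ← one_div]
    gcongr
  have htail1 : (∑' i, ((x (i + N)).toNat : ℝ) / 2 ^ ((i + N) + 1)) ≤ 1 / 2 ^ N := by
    calc (∑' i, ((x (i + N)).toNat : ℝ) / 2 ^ ((i + N) + 1))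
        ≤ ∑' i, (1/2 : ℝ) ^ (i + N + 1) :=
          Summable.tsum_le_tsum hle ((summable_nat_add_iff N).mpr hs) hg
      _ = 1 / 2 ^ N := by
          have he : ∀ i : ℕ, (1/2 : ℝ) ^ (i + N + 1) = (1/2:ℝ)^i * (1/2)^(N+1) := by
            intro i; rw [← pow_add]; ring_nf
          rw [tsum_congr he, tsum_mul_right, tsum_geometric_two]
          rw [one_div, inv_pow]
          field_simp
          ring
  have heq : binExp x
      = (vN N x : ℝ) / 2 ^ N + ∑' i, ((x (i + N)).toNat : ℝ) / 2 ^ ((i + N) + 1) := by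
    rw [binExp, ← hsplit, vN_sum]
  constructor
  · rw [heq]; linarith
  · rw [heq]
    have h2 : ((vN N x : ℝ) + 1) / 2 ^ N = (vN N x : ℝ)/2^N + 1/2^N := by ring
    rw [h2]; linarith


lemma cantor_dist_le {x y : ℕ → Bool} {N : ℕ} (h : ∀ j < N, x j = y j) :
    dist x y ≤ 1 / ((N : ℝ) + 1) := by
  by_cases hxy : x = y
  · subst hxy
    simp only [dist_self]
    positivity
  · have hd : dist x y = 1 / (((sInf {n : ℕ | x n ≠ y n} : ℕ) : ℝ) + 1) := by
      show (if x = y then (0:ℝ) else _) = _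
      rw [if_neg hxy]
    rw [hd]
    have hne : {n : ℕ | x n ≠ y n}.Nonempty := by
      rcases Function.ne_iff.mp hxy with ⟨n, hn⟩; exact ⟨n, hn⟩
    have hN : N ≤ sInf {n : ℕ | x n ≠ y n} := by
      by_contra hc
      push_neg at hc
      exact (Nat.sInf_mem hne) (h _ hc)
    have hNR : (N : ℝ) ≤ ((sInf {n : ℕ | x n ≠ y n} : ℕ) : ℝ) := by exact_mod_cast hN
    apply one_div_le_one_div_of_le (by positivity) (by linarith)

/-- For `k ≥ 1`, if `Y ⊆ [0,1]^k` has strong measure zero, then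
`T^{-k}[Y] ⊆ (2^ℕ)^k` has strong measure zero (max metrics on both products). -/
theorem smz_preimage_binExp_pow (k : ℕ) (hk : 0 < k) (Y : Set (Fin k → ℝ))
    (hY : Y ⊆ {v | ∀ i, v i ∈ Set.Icc (0 : ℝ) 1}) (hsmz : SMZSet Y) :
    SMZSet ((fun x : Fin k → (ℕ → Bool) => fun i => binExp (x i)) ⁻¹' Y) := by
  intro ε hε
  set T : (Fin k → (ℕ → Bool)) → (Fin k → ℝ) := fun x => fun i => binExp (x i) with hT
  set B : ℕ := 3 ^ k with hB
  have hBpos : 0 < B := pow_pos (by norm_num) k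
  set L : ℕ → ℕ := fun q => Finset.sup (Finset.range B) (fun j => Nat.floor (1 / ε (B * q + j)))
    with hL
  have hδpos : ∀ q, (0:ℝ) < 1 / 2 ^ (L q) := fun q => by positivity
  obtain ⟨J, hJd, hJc⟩ := hsmz (fun q => 1 / 2 ^ (L q)) hδpos
  set P : ℕ → Set (Fin k → (ℕ → Bool)) := fun q => T ⁻¹' (J q) with hP
  have hx0 : ∀ q, ∃ z : Fin k → (ℕ → Bool), (P q).Nonempty → z ∈ P q := by
    intro q
    by_cases h : (P q).Nonempty
    · exact ⟨h.choose, fun _ => h.choose_spec⟩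
    · exact ⟨fun _ _ => false, fun h' => absurd h' h⟩
  choose x₀ hx₀ using hx0
  have e : (Fin k → Fin 3) ≃ Fin B := Fintype.equivFinOfCardEq (by simp [hB])
  set A : ℕ → (Fin k → Fin 3) → Set (Fin k → (ℕ → Bool)) := fun q c =>
    {x | x ∈ P q ∧ ∀ i, vN (L q) (x i) + 1 = vN (L q) (x₀ q i) + (c i : ℕ)} with hA
  refine ⟨fun m => A (m / B) (e.symm ⟨m % B, Nat.mod_lt _ hBpos⟩), ?_, ?_⟩
  · -- diameters
    intro m
    have hkey : 1 / ((L (m / B) : ℝ) + 1) < ε m := by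
      have hm : B * (m / B) + m % B = m := Nat.div_add_mod m B
      have hsup : Nat.floor (1 / ε m) ≤ L (m / B) := by
        have h1 : Nat.floor (1 / ε (B * (m / B) + m % B)) ≤ L (m / B) :=
          Finset.le_sup (f := fun j => Nat.floor (1 / ε (B * (m / B) + j)))
            (Finset.mem_range.mpr (Nat.mod_lt m hBpos))
        rwa [hm] at h1
      have h1 : 1 / ε m < (L (m / B) : ℝ) + 1 := by
        have h2 := Nat.lt_floor_add_one (1 / ε m)
        have h3 : (Nat.floor (1 / ε m) : ℝ) ≤ (L (m / B) : ℝ) := by exact_mod_cast hsup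
        linarith
      rw [div_lt_iff₀ (by positivity), mul_comm]
      exact (div_lt_iff₀ (hε m)).mp h1
    refine lt_of_le_of_lt ?_ ((ENNReal.ofReal_lt_ofReal_iff (hε m)).mpr hkey)
    apply EMetric.diam_le
    intro x hx y hy
    simp only [hA, Set.mem_setOf_eq] at hx hy
    rw [edist_dist]
    apply ENNReal.ofReal_le_ofReal
    rw [dist_pi_le_iff (by positivity)]
    intro i
    have hv : vN (L (m / B)) (x i) = vN (L (m / B)) (y i) := by
      have h1 := hx.2 i
      have h2 := hy.2 i
      omega
    exact cantor_dist_le (fun j hj => vN_inj _ _ _ hv j hj)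
  · -- coverage
    intro x hx
    rcases Set.mem_iUnion.mp (hJc hx) with ⟨q, hq⟩
    have hxP : x ∈ P q := hq
    have hne : (P q).Nonempty := ⟨x, hxP⟩
    have hx₀P : x₀ q ∈ P q := hx₀ q hne
    have hdist : ∀ i, |binExp (x i) - binExp (x₀ q i)| < 1 / 2 ^ (L q) := by
      intro i
      have h1 : edist (T x) (T (x₀ q)) < ENNReal.ofReal (1 / 2 ^ (L q)) :=
        lt_of_le_of_lt (EMetric.edist_le_diam_of_mem hq hx₀P) (hJd q)
      have h2 : dist (T x) (T (x₀ q)) < 1 / 2 ^ (L q) := by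
        rw [edist_dist] at h1
        exact (ENNReal.ofReal_lt_ofReal_iff (by positivity)).mp h1
      calc |binExp (x i) - binExp (x₀ q i)| = dist (T x i) (T (x₀ q) i) := by
            rw [Real.dist_eq]
        _ ≤ dist (T x) (T (x₀ q)) := dist_le_pi_dist _ _ i
        _ < _ := h2
    have hvc : ∀ i, ∃ c : Fin 3, vN (L q) (x i) + 1 = vN (L q) (x₀ q i) + (c : ℕ) := by
      intro i
      obtain ⟨hl, hr⟩ := binExp_bounds (x i) (L q)
      obtain ⟨hl', hr'⟩ := binExp_bounds (x₀ q i) (L q)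
      have habs := hdist i
      have hE : (0:ℝ) < 2 ^ (L q) := by positivity
      rw [div_le_iff₀ hE] at hl hl'
      rw [le_div_iff₀ hE] at hr hr'
      obtain ⟨ha1, ha2⟩ := abs_sub_lt_iff.mp habs
      have key1 : binExp (x i) * 2 ^ (L q) - binExp (x₀ q i) * 2 ^ (L q) < 1 := by
        have h3 := mul_lt_mul_of_pos_right ha1 hE
        rw [sub_mul, one_div_mul_cancel hE.ne'] at h3
        exact h3
      have key2 : binExp (x₀ q i) * 2 ^ (L q) - binExp (x i) * 2 ^ (L q) < 1 := by
        have h3 := mul_lt_mul_of_pos_right ha2 hE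
        rw [sub_mul, one_div_mul_cancel hE.ne'] at h3
        exact h3
      have h1R : (vN (L q) (x i) : ℝ) < (vN (L q) (x₀ q i) : ℝ) + 2 := by linarith
      have h2R : (vN (L q) (x₀ q i) : ℝ) < (vN (L q) (x i) : ℝ) + 2 := by linarith
      have h1 : vN (L q) (x i) < vN (L q) (x₀ q i) + 2 := by exact_mod_cast h1R
      have h2 : vN (L q) (x₀ q i) < vN (L q) (x i) + 2 := by exact_mod_cast h2R
      refine ⟨⟨vN (L q) (x i) + 1 - vN (L q) (x₀ q i), by omega⟩, ?_⟩
      show vN (L q) (x i) + 1 = vN (L q) (x₀ q i) + (vN (L q) (x i) + 1 - vN (L q) (x₀ q i))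
      omega
    choose c hc using hvc
    refine Set.mem_iUnion.mpr ⟨B * q + (e c : ℕ), ?_⟩
    have hec : ((e c : ℕ)) < B := (e c).isLt
    have hdiv : (B * q + (e c : ℕ)) / B = q := by
      rw [Nat.mul_add_div hBpos, Nat.div_eq_of_lt hec, add_zero]
    have hmod : (B * q + (e c : ℕ)) % B = (e c : ℕ) := by
      rw [Nat.mul_add_mod, Nat.mod_eq_of_lt hec]
    have hfin : (⟨(B * q + (e c : ℕ)) % B, Nat.mod_lt _ hBpos⟩ : Fin B) = e c :=
      Fin.ext hmod
    show x ∈ A ((B * q + (e c : ℕ)) / B) (e.symm ⟨(B * q + (e c : ℕ)) % B, Nat.mod_lt _ hBpos⟩)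
    rw [hdiv, hfin, Equiv.symm_apply_apply]
    exact ⟨hxP, hc⟩
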